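/- Main theorem: let S be a Γ-semigroup and γ₀ ∈ Γ such that S_{γ₀} is a completely simple semigroup without zero. Then for every γ ∈ Γ, the semigroup S_γ is completely simple without zero. -/
import Mathlib


open FreeSemigroup

section GammaSemigroup

variable {S Γ : Type}

/-- One-step rewriting on words over S ⊕ Γ. -/
inductive GStep (m : S → Γ → S → S) (γ₀ : Γ) : List (S ⊕ Γ) → List (S ⊕ Γ) → Prop
  | gg (u v : List (S ⊕ Γ)) (γ₁ γ₂ : Γ) :
      GStep m γ₀ (u ++ Sum.inr γ₁ :: Sum.inr γ₂ :: v) (u ++ Sum.inr γ₁ :: v)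
  | xgy (u v : List (S ⊕ Γ)) (x : S) (γ : Γ) (y : S) :
      GStep m γ₀ (u ++ Sum.inl x :: Sum.inr γ :: Sum.inl y :: v) (u ++ Sum.inl (m x γ y) :: v)
  | xy (u v : List (S ⊕ Γ)) (x y : S) :
      GStep m γ₀ (u ++ Sum.inl x :: Sum.inl y :: v) (u ++ Sum.inl (m x γ₀ y) :: v)

/-- The defining relations on the free semigroup on S ⊕ Γ. -/
def GRel (m : S → Γ → S → S) (γ₀ : Γ) :
    FreeSemigroup (S ⊕ Γ) → FreeSemigroup (S ⊕ Γ) → Prop :=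
  fun a b =>
    (∃ γ₁ γ₂ : Γ, a = of (Sum.inr γ₁) * of (Sum.inr γ₂) ∧ b = of (Sum.inr γ₁)) ∨
    (∃ (x y : S) (γ : Γ), a = of (Sum.inl x) * of (Sum.inr γ) * of (Sum.inl y) ∧
      b = of (Sum.inl (m x γ y))) ∨
    (∃ x y : S, a = of (Sum.inl x) * of (Sum.inl y) ∧ b = of (Sum.inl (m x γ₀ y)))

/-- The congruence generated by the defining relations. -/
def GCon (m : S → Γ → S → S) (γ₀ : Γ) : Con (FreeSemigroup (S ⊕ Γ)) := conGen (GRel m γ₀)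

/-- The universal semigroup Σ of the Γ-semigroup S. -/
abbrev USem (m : S → Γ → S → S) (γ₀ : Γ) := (GCon m γ₀).Quotient

/-- The canonical map μ : S → Σ. -/
def gmu (m : S → Γ → S → S) (γ₀ : Γ) (x : S) : USem m γ₀ :=
  ((of (Sum.inl x) : FreeSemigroup (S ⊕ Γ)) : (GCon m γ₀).Quotient)

/-- The canonical map Γ → Σ. -/
def giota (m : S → Γ → S → S) (γ₀ : Γ) (γ : Γ) : USem m γ₀ :=
  ((of (Sum.inr γ) : FreeSemigroup (S ⊕ Γ)) : (GCon m γ₀).Quotient)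

/-- Principal left ideal of an element of a semigroup. -/
def pLeft {T : Type} [Semigroup T] (a : T) : Set T := {w | ∃ t : T, w = t * a} ∪ {a}

/-- Principal right ideal of an element of a semigroup. -/
def pRight {T : Type} [Semigroup T] (a : T) : Set T := {w | ∃ t : T, w = a * t} ∪ {a}

/-- Principal left ideal in the Γ-semigroup: SΓx ∪ {x}. -/
def pLeftG (m : S → Γ → S → S) (x : S) : Set S := {y | ∃ (s : S) (γ : Γ), y = m s γ x} ∪ {x}

/-- Principal right ideal in the Γ-semigroup: xΓS ∪ {x}. -/
def pRightG (m : S → Γ → S → S) (x : S) : Set S := {y | ∃ (γ : Γ) (s : S), y = m x γ s} ∪ {x}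

/-- Green's H relation on the Γ-semigroup. -/
def HrelG (m : S → Γ → S → S) (a b : S) : Prop := pLeftG m a = pLeftG m b ∧ pRightG m a = pRightG m b

/-- S_δ is a simple semigroup: its only two-sided ideal is S itself. -/
def SimpleAt (m : S → Γ → S → S) (δ : Γ) : Prop :=
  ∀ J : Set S, J.Nonempty → (∀ t : S, ∀ j ∈ J, m t δ j ∈ J ∧ m j δ t ∈ J) → J = Set.univ

/-- e is an idempotent of S_δ. -/
def IdemAt (m : S → Γ → S → S) (δ : Γ) (e : S) : Prop := m e δ e = e

/-- e is a primitive idempotent of S_δ. -/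
def PrimAt (m : S → Γ → S → S) (δ : Γ) (e : S) : Prop :=
  IdemAt m δ e ∧ ∀ f, IdemAt m δ f → m e δ f = f → m f δ e = f → f = e

/-- S_δ is completely simple. -/
def CSimpleAt (m : S → Γ → S → S) (δ : Γ) : Prop := SimpleAt m δ ∧ ∃ e, PrimAt m δ e

/-- S_δ has no zero element. -/
def NoZeroAt (m : S → Γ → S → S) (δ : Γ) : Prop := ¬ ∃ z : S, ∀ t : S, m z δ t = z ∧ m t δ z = z

/-- L is a left ideal of S_δ. -/
def LIdealAt (m : S → Γ → S → S) (δ : Γ) (L : Set S) : Prop :=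
  L.Nonempty ∧ ∀ t : S, ∀ l ∈ L, m t δ l ∈ L

/-- L is a minimal left ideal of S_δ. -/
def MinLIdealAt (m : S → Γ → S → S) (δ : Γ) (L : Set S) : Prop :=
  LIdealAt m δ L ∧ ∀ L' ⊆ L, LIdealAt m δ L' → L' = L

/-- S_δ is a group. -/
def GroupAt (m : S → Γ → S → S) (δ : Γ) : Prop :=
  ∃ e : S, (∀ a, m e δ a = a ∧ m a δ e = a) ∧ ∀ a, ∃ b, m a δ b = e ∧ m b δ a = e

/-- G is a subgroup (a sub-semigroup that is a group) of the semigroup T. -/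
def IsSubgroupOf {T : Type} [Semigroup T] (G : Set T) : Prop :=
  (∀ a ∈ G, ∀ b ∈ G, a * b ∈ G) ∧
  ∃ e ∈ G, (∀ g ∈ G, e * g = g ∧ g * e = g) ∧ ∀ g ∈ G, ∃ h ∈ G, g * h = e ∧ h * g = e

/-- The set Σ' = Σ \ Γ. -/
def USem' (m : S → Γ → S → S) (γ₀ : Γ) : Set (USem m γ₀) := {w | ¬ ∃ γ : Γ, w = giota m γ₀ γ}

end GammaSemigroup

theorem stmt (S Γ : Type) [Nonempty S] [Nonempty Γ] (m : S → Γ → S → S)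
    (assoc : ∀ (a b c : S) (α β : Γ), m (m a α b) β c = m a α (m b β c)) (γ₀ : Γ) (hcs : CSimpleAt m γ₀) (hnz : NoZeroAt m γ₀) :
    ∀ γ : Γ, CSimpleAt m γ ∧ NoZeroAt m γ := by
  have hcs' : SimpleAt m γ₀ ∧ ∃ e, PrimAt m γ₀ e := hcs
  obtain ⟨hsimp, e, heprim⟩ := hcs'
  have heid' : m e γ₀ e = e := heprim.1
  have hprim : ∀ f, m f γ₀ f = f → m e γ₀ f = f → m f γ₀ e = f → f = e := heprim.2
  have lf : ∀ {p q r : S} {δ : Γ}, m p δ q = r → ∀ (β : Γ) (t : S),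
      m p δ (m q β t) = m r β t := fun h β t => by rw [← assoc, h]
  -- strong simplicity at γ₀ : S a S = S
  have key0 : ∀ a b : S, ∃ u v : S, b = m (m u γ₀ a) γ₀ v := by
    intro a b
    have h := hsimp {w | ∃ u v, w = m (m u γ₀ a) γ₀ v}
      ⟨m (m a γ₀ a) γ₀ a, a, a, rfl⟩
      (by
        rintro t j ⟨u, v, rfl⟩
        exact ⟨⟨m t γ₀ u, v, by simp only [assoc]⟩, ⟨u, m v γ₀ t, by simp only [assoc]⟩⟩)
    have hb : b ∈ {w | ∃ u v, w = m (m u γ₀ a) γ₀ v} := by rw [h]; trivial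
    exact hb
  -- in eSe, a one-sided inverse is two-sided
  have inv_lemma : ∀ x z : S, m x γ₀ e = x → m e γ₀ z = z → m z γ₀ e = z →
      m x γ₀ z = e → m z γ₀ x = e := by
    intro x z hx hz hze hxz
    have hf : m (m z γ₀ x) γ₀ (m z γ₀ x) = m z γ₀ x := by
      rw [assoc z x, ← assoc x z x, hxz, ← assoc z e x, hze]
    have h1 : m e γ₀ (m z γ₀ x) = m z γ₀ x := by rw [← assoc, hz]
    have h2 : m (m z γ₀ x) γ₀ e = m z γ₀ x := by rw [assoc, hx]
    exact hprim (m z γ₀ x) hf h1 h2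
  -- eSe is a group at γ₀
  have ginv : ∀ a : S, m e γ₀ a = a → m a γ₀ e = a →
      ∃ b : S, m e γ₀ b = b ∧ m b γ₀ e = b ∧ m a γ₀ b = e ∧ m b γ₀ a = e := by
    intro a hea hae
    obtain ⟨u, v, huv⟩ := key0 a e
    have huv' : m u γ₀ (m a γ₀ v) = e := by rw [← assoc]; exact huv.symm
    set x := m (m e γ₀ u) γ₀ e with hxs
    set y := m (m e γ₀ v) γ₀ e with hys
    have hxe : m x γ₀ e = x := by rw [hxs, assoc, heid']
    have hex : m e γ₀ x = x := by rw [hxs, ← assoc, ← assoc, heid']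
    have hye : m y γ₀ e = y := by rw [hys, assoc, heid']
    have hey : m e γ₀ y = y := by rw [hys, ← assoc, ← assoc, heid']
    have hxay : m x γ₀ (m a γ₀ y) = e := by
      rw [hxs, hys]
      simp only [assoc]
      rw [lf hae, lf hea, ← assoc a v e, lf huv', heid', heid']
    have hez : m e γ₀ (m a γ₀ y) = m a γ₀ y := by rw [← assoc, hea]
    have hze : m (m a γ₀ y) γ₀ e = m a γ₀ y := by rw [assoc, hye]
    have hzx : m (m a γ₀ y) γ₀ x = e := inv_lemma x (m a γ₀ y) hxe hez hze hxay
    have hwe : m (m x γ₀ a) γ₀ e = m x γ₀ a := by rw [assoc, hae]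
    have hwy : m (m x γ₀ a) γ₀ y = e := by rw [assoc]; exact hxay
    have hyw : m y γ₀ (m x γ₀ a) = e := inv_lemma (m x γ₀ a) y hwe hey hye hwy
    refine ⟨m y γ₀ x, ?_, ?_, ?_, ?_⟩
    · rw [← assoc, hey]
    · rw [assoc, hxe]
    · rw [← assoc]; exact hzx
    · rw [assoc]; exact hyw
  intro γ
  -- cross-simplicity : S γ a γ S = S, proved as a γ₀-ideal
  have keyγ : ∀ a b : S, ∃ u v : S, b = m (m u γ a) γ v := by
    intro a b
    have h := hsimp {w | ∃ u v, w = m (m u γ a) γ v}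
      ⟨m (m a γ a) γ a, a, a, rfl⟩
      (by
        rintro t j ⟨u, v, rfl⟩
        exact ⟨⟨m t γ₀ u, v, by simp only [assoc]⟩, ⟨u, m v γ₀ t, by simp only [assoc]⟩⟩)
    have hb : b ∈ {w | ∃ u v, w = m (m u γ a) γ v} := by rw [h]; trivial
    exact hb
  have hsγ : SimpleAt m γ := by
    intro J hne hcl
    obtain ⟨j, hj⟩ := hne
    apply Set.eq_univ_of_forall
    intro s
    obtain ⟨u, v, hs⟩ := keyγ j s
    rw [hs]
    exact (hcl v _ ((hcl u j hj).1)).2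
  have hnzγ : NoZeroAt m γ := by
    rintro ⟨z, hz⟩
    have huniv : ({z} : Set S) = Set.univ := by
      apply hsγ {z} ⟨z, rfl⟩
      intro t j hj
      rw [Set.mem_singleton_iff] at hj
      subst hj
      exact ⟨(hz t).2, (hz t).1⟩
    have hall : ∀ s : S, s = z := by
      intro s
      have : s ∈ ({z} : Set S) := by rw [huniv]; trivial
      exact this
    exact hnz ⟨z, fun t => ⟨by rw [hall t]; exact hall _, by rw [hall t]; exact hall _⟩⟩
  -- the sandwich element c = e γ e and its γ₀-inverse c'
  have hec : m e γ₀ (m e γ e) = m e γ e := by rw [← assoc, heid']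
  have hce : m (m e γ e) γ₀ e = m e γ e := by rw [assoc, heid']
  obtain ⟨c', hec', hc'e, hcc', hc'c⟩ := ginv (m e γ e) hec hce
  have sand : ∀ x y : S, m x γ₀ e = x → m e γ₀ y = y →
      m x γ y = m x γ₀ (m (m e γ e) γ₀ y) := by
    intro x y hx hy
    conv_lhs => rw [← hx, ← hy]
    rw [assoc x e, ← assoc e e y]
  have hc'id : m c' γ c' = c' := by
    rw [sand c' c' hc'e hec', hcc']
    exact hc'e
  have hprimγ : PrimAt m γ c' := by
    refine ⟨hc'id, ?_⟩
    intro f hff h1 h2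
    have hff' : m f γ f = f := hff
    have hef : m e γ₀ f = f := by rw [← h1, ← assoc, hec']
    have hfe : m f γ₀ e = f := by
      rw [← h2, assoc, hc'e]
    obtain ⟨g, heg, hge, hfg, hgf⟩ := ginv f hef hfe
    have heb : m e γ₀ (m c' γ₀ (m g γ₀ c')) = m c' γ₀ (m g γ₀ c') := by
      rw [← assoc, hec']
    have hfb : m f γ (m c' γ₀ (m g γ₀ c')) = c' := by
      rw [sand f _ hfe heb, ← assoc (m e γ e) c' (m g γ₀ c'), hcc',
        ← assoc e g c', heg, ← assoc f g c', hfg]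
      exact hec'
    calc f = m f γ c' := h2.symm
      _ = m f γ (m f γ (m c' γ₀ (m g γ₀ c'))) := by rw [hfb]
      _ = m (m f γ f) γ (m c' γ₀ (m g γ₀ c')) := by rw [assoc]
      _ = m f γ (m c' γ₀ (m g γ₀ c')) := by rw [hff']
      _ = c' := hfb
  exact ⟨⟨hsγ, c', hprimγ⟩, hnzγ⟩
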